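/- arXiv:1209.2202 — 2 statements merged into one kernel-verified Lean document; each statement's English description precedes it below -/
import Mathlib

section
/- For every finite simple graph G of order n, 4 · χ₂(G) · χ₂(Ḡ) ≤ (n + 1)², i.e. χ₂(G)·χ₂(Ḡ) ≤ ((n+1)/2)². -/
/-!
Vertices at distance exactly 2 are non-adjacent, so a proper coloring of `Gᶜ` is a 2-proper
coloring of `G`: `χ₂(G) ≤ χ(Gᶜ)` and `χ₂(Gᶜ) ≤ χ(G)`. It remains to combine the
Nordhaus–Gaddum bound `χ(G) + χ(Gᶜ) ≤ n + 1` with `4xy ≤ (x + y)²`. Nordhaus–Gaddum follows by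
deleting a vertex `v`: both colorings need a new color only if `v` has degree at least
`χ(G - v)` in `G` and at least `χ(Gᶜ - v)` in `Gᶜ`, and these degrees add up to `n - 1`.
-/

open SimpleGraph

/-- The graph on the vertices of `G` where two vertices are adjacent
iff their distance in `G` is exactly 2. -/
def distTwoGraph {V : Type*} (G : SimpleGraph V) : SimpleGraph V where
  Adj u v := G.dist u v = 2
  symm := by
    constructor
    intro u v h
    rwa [SimpleGraph.dist_comm]
  loopless := by
    constructor
    intro v h
    simp [SimpleGraph.dist_self] at h

/-- The 2-proper chromatic number of `G`. -/
noncomputable def chi2 {V : Type*} (G : SimpleGraph V) : ℕ∞ :=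
  (distTwoGraph G).chromaticNumber

namespace SimpleGraph

variable {V α : Type*} {H : SimpleGraph V} {v : V}

def Coloring.extendAt [DecidableEq V] (C : (H.induce {v}ᶜ).Coloring α) (c : α)
    (hc : ∀ w (hw : w ≠ v), H.Adj v w → C ⟨w, hw⟩ ≠ c) : H.Coloring α :=
  Coloring.mk (fun w => if hw : w = v then c else C ⟨w, hw⟩) fun {u w} huw => by
    split_ifs with hu hw hw
    · exact absurd (hu.trans hw.symm) (H.ne_of_adj huw)
    · subst hu; exact (hc w hw huw).symm
    · subst hw; exact hc u hu huw.symm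
    · exact C.valid huw

theorem Colorable.of_induce_compl_singleton {n : ℕ} (h : (H.induce {v}ᶜ).Colorable n) :
    H.Colorable (n + 1) := by
  classical
  obtain ⟨C⟩ := h
  refine ⟨(H.induce {v}ᶜ |>.recolorOfEmbedding Fin.castSuccEmb C).extendAt (Fin.last n) ?_⟩
  intro w hw _
  simp [Fin.castSucc_ne_last]

theorem Colorable.of_induce_compl_singleton_of_degree_lt [Fintype (H.neighborSet v)] {n : ℕ}
    (h : (H.induce {v}ᶜ).Colorable n) (hdeg : H.degree v < n) : H.Colorable n := by
  classical
  obtain ⟨C⟩ := h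
  let usedColors : Finset (Fin n) :=
    Finset.univ.image fun w : H.neighborSet v => C ⟨w, (H.ne_of_adj w.2).symm⟩
  have hused : usedColors.card < (Finset.univ : Finset (Fin n)).card := calc
    usedColors.card ≤ Fintype.card (H.neighborSet v) := Finset.card_image_le
    _ = H.degree v := H.card_neighborSet_eq_degree v
    _ < _ := by simpa using hdeg
  obtain ⟨c, -, hc⟩ := Finset.exists_mem_notMem_of_card_lt_card hused
  refine ⟨C.extendAt c fun w hw hvw hwc => hc ?_⟩
  exact Finset.mem_image.mpr ⟨⟨w, hvw⟩, Finset.mem_univ _, hwc⟩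

theorem compl_induce (G : SimpleGraph V) (s : Set V) : (G.induce s)ᶜ = Gᶜ.induce s := by
  ext ⟨u, hu⟩ ⟨w, hw⟩
  simp [Subtype.ext_iff]

theorem exists_colorable_colorable_compl_add_le_card_add_one [Fintype V] (G : SimpleGraph V) :
    ∃ a b : ℕ, G.Colorable a ∧ Gᶜ.Colorable b ∧ a + b ≤ Fintype.card V + 1 := by
  induction hn : Fintype.card V generalizing V with
  | zero =>
    have : IsEmpty V := Fintype.card_eq_zero_iff.mp hn
    exact ⟨0, 0, .of_isEmpty 0, .of_isEmpty 0, zero_le_one⟩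
  | succ n ih =>
    classical
    obtain ⟨v⟩ : Nonempty V := Fintype.card_pos_iff.mp (by omega)
    have hcard : Fintype.card ({v}ᶜ : Set V) = n := by
      rw [Fintype.card_compl_set, Set.card_singleton, hn, Nat.add_sub_cancel]
    obtain ⟨a, b, ha, hb, hab⟩ := ih (G.induce {v}ᶜ) hcard
    rw [compl_induce] at hb
    by_cases hG : G.degree v < a
    · exact ⟨a, b + 1, ha.of_induce_compl_singleton_of_degree_lt hG, hb.of_induce_compl_singleton,
        by omega⟩
    by_cases hGc : Gᶜ.degree v < b
    · exact ⟨a + 1, b, ha.of_induce_compl_singleton, hb.of_induce_compl_singleton_of_degree_lt hGc,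
        by omega⟩
    have hdeg : G.degree v + Gᶜ.degree v = n := by
      rw [degree_compl, hn]; have := G.degree_lt_card_verts v; omega
    exact ⟨a + 1, b + 1, ha.of_induce_compl_singleton, hb.of_induce_compl_singleton, by omega⟩

end SimpleGraph

theorem distTwoGraph_le_compl {V : Type*} (G : SimpleGraph V) : distTwoGraph G ≤ Gᶜ := by
  intro u w (h : G.dist u w = 2)
  refine ⟨fun huw => by simp [huw] at h, fun hadj => ?_⟩
  rw [dist_eq_one_iff_adj.mpr hadj] at h
  omega

theorem chi2_le_chromaticNumber_compl {V : Type*} (G : SimpleGraph V) :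
    chi2 G ≤ Gᶜ.chromaticNumber :=
  chromaticNumber_mono _ (distTwoGraph_le_compl G)

theorem four_mul_chi2_mul_chi2_compl_le {V : Type*} [Fintype V] (G : SimpleGraph V) :
    4 * (chi2 G * chi2 Gᶜ) ≤ ((Fintype.card V : ℕ∞) + 1) ^ 2 := by
  obtain ⟨a, b, ha, hb, hab⟩ := G.exists_colorable_colorable_compl_add_le_card_add_one
  have hG : chi2 G ≤ b := (chi2_le_chromaticNumber_compl G).trans hb.chromaticNumber_le
  have hGc : chi2 Gᶜ ≤ a :=
    (chi2_le_chromaticNumber_compl Gᶜ).trans (by rw [compl_compl]; exact ha.chromaticNumber_le)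
  calc 4 * (chi2 G * chi2 Gᶜ) ≤ 4 * (b * a : ℕ∞) := by gcongr
    _ = ((4 * b * a : ℕ) : ℕ∞) := by push_cast; ring
    _ ≤ (((a + b) ^ 2 : ℕ) : ℕ∞) := by exact_mod_cast four_mul_le_sq_add b a |>.trans_eq (by ring)
    _ ≤ ((Fintype.card V : ℕ∞) + 1) ^ 2 := by exact_mod_cast Nat.pow_le_pow_left hab 2
end

section
/- Let G be a finite simple graph of odd order n ≥ 7. Then n + 1 ≤ χᵢ(G) + χᵢ(Ḡ) ≤ 2n. -/
open SimpleGraph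

/-- The graph on the vertices of `G` where two distinct vertices are adjacent
iff they have a common neighbor in `G`. -/
def commonNbrGraph {V : Type*} (G : SimpleGraph V) : SimpleGraph V where
  Adj u v := u ≠ v ∧ ∃ w, G.Adj u w ∧ G.Adj v w
  symm := by
    constructor
    rintro u v ⟨huv, w, h1, h2⟩
    exact ⟨huv.symm, w, h2, h1⟩
  loopless := by
    constructor
    rintro v ⟨hv, -⟩
    exact hv rfl

/-- The injective chromatic number of `G`. -/
noncomputable def chiInj {V : Type*} (G : SimpleGraph V) : ℕ∞ :=
  (commonNbrGraph G).chromaticNumber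

/-!
An injective colouring gives distinct colours to the neighbours of each vertex, so
`χᵢ(G) ≥ Δ(G)` and hence `χᵢ(G) + χᵢ(Ḡ) ≥ n - 1`. Write `n = 2m + 1`. If `χᵢ(G) < m`, every
two vertices have degree sum `> n` in `Ḡ`, hence a common neighbour there, and `χᵢ(Ḡ) = n`;
so a counterexample has `(χᵢ(G), χᵢ(Ḡ))` equal to `(m, m)`, `(m + 1, m)` or `(m, m + 1)`.
For `(m, m)` the graph `G` is `m`-regular and every vertex sees every colour exactly once;
"the neighbour of my own colour" is then a fixed-point-free involution, so `n` is even.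
For `(m + 1, m)` the minimum degree is `m`, so equally coloured vertices are adjacent: the
colour classes are a singleton `{z}` and `m` edges `{xᵢ, yᵢ}` without common neighbour, with
`z ~ xᵢ` and `z ≁ yᵢ`. Chasing an injective `m`-colouring of `Ḡ` through this structure
produces two `xᵢ` of the same colour with a common neighbour in `Ḡ` (this needs `m ≥ 3`).
The case `(m, m + 1)` is the previous one for `Ḡ`.
-/

open Finset

theorem Function.Involutive.even_card {α : Type*} [Fintype α] {f : α → α}
    (hf : Function.Involutive f) (hne : ∀ a, f a ≠ a) : Even (Fintype.card α) := by
  have h : ∑ _a : α, (1 : ZMod 2) = 0 :=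
    sum_involution (fun a _ => f a) (fun _ _ => by decide) (fun a _ _ => hne a)
      (fun _ _ => mem_univ _) (fun a _ => hf a)
  rw [sum_const, card_univ, nsmul_eq_mul, mul_one, ZMod.natCast_eq_zero_iff] at h
  exact even_iff_two_dvd.2 h

theorem Finset.exists_eq_one_and_eq_two_of_sum_eq {ι : Type*} [Fintype ι] [DecidableEq ι]
    {b : ℕ} (hι : Fintype.card ι = b + 1) {f : ι → ℕ} (hf : ∀ i, f i ≤ 2)
    (hsum : ∑ i, f i = 2 * b + 1) : ∃ i₀, f i₀ = 1 ∧ ∀ i ≠ i₀, f i = 2 := by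
  obtain ⟨i₀, -, hodd⟩ : ∃ i₀ ∈ univ, Odd (f i₀) := by
    by_contra! h
    exact Nat.not_even_iff_odd.2 ⟨b, by omega⟩
      (hsum ▸ even_sum _ fun i hi => Nat.not_odd_iff_even.1 (h i hi))
  have hi₀ : f i₀ = 1 := by
    have := hf i₀
    obtain ⟨k, hk⟩ := hodd
    omega
  refine ⟨i₀, hi₀, fun i hi => ?_⟩
  have hrest : ∑ j ∈ univ.erase i₀, f j = ∑ _j ∈ univ.erase i₀, 2 := by
    rw [sum_const, card_erase_of_mem (mem_univ _), card_univ, hι, smul_eq_mul]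
    have := add_sum_erase univ f (mem_univ i₀)
    omega
  exact (sum_eq_sum_iff_of_le fun j _ => hf j).1 hrest i (mem_erase.2 ⟨hi, mem_univ _⟩)

namespace SimpleGraph

variable {V : Type*} [Fintype V] (G : SimpleGraph V) [DecidableRel G.Adj]

theorem disjoint_neighborFinset {u v : V} (h : ¬ ∃ w, G.Adj u w ∧ G.Adj v w) :
    Disjoint (G.neighborFinset u) (G.neighborFinset v) :=
  Finset.disjoint_left.2 fun w hu hv => by
    rw [mem_neighborFinset] at hu hv
    exact h ⟨w, hu, hv⟩

theorem exists_common_adj_of_card_lt_degree_add_degree {u v : V}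
    (h : Fintype.card V < G.degree u + G.degree v) : ∃ w, G.Adj u w ∧ G.Adj v w := by
  classical
  by_contra hno
  have hdisj := G.disjoint_neighborFinset hno
  have := card_le_univ (G.neighborFinset u ∪ G.neighborFinset v)
  rw [card_union_of_disjoint hdisj, card_neighborFinset_eq_degree,
    card_neighborFinset_eq_degree] at this
  omega

theorem exists_common_adj_of_not_adj {u v : V} (huv : u ≠ v) (hadj : ¬ G.Adj u v)
    (h : Fintype.card V ≤ G.degree u + G.degree v + 1) : ∃ w, G.Adj u w ∧ G.Adj v w := by
  classical
  by_contra hno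
  have hdisj := G.disjoint_neighborFinset hno
  have hsub : G.neighborFinset u ∪ G.neighborFinset v ⊆ {u, v}ᶜ := by
    intro w hw
    simp only [mem_union, mem_neighborFinset] at hw
    simp only [mem_compl, mem_insert, mem_singleton, not_or]
    rcases hw with hw | hw
    · exact ⟨(G.ne_of_adj hw).symm, fun h => hadj (h ▸ hw)⟩
    · exact ⟨fun h => hadj (h ▸ hw).symm, (G.ne_of_adj hw).symm⟩
  have := card_le_card hsub
  rw [card_union_of_disjoint hdisj, card_neighborFinset_eq_degree,
    card_neighborFinset_eq_degree, card_compl, card_pair huv] at this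
  have : 2 ≤ Fintype.card V := Fintype.one_lt_card_iff.2 ⟨u, v, huv⟩
  omega

-- The shape forced on `G` by injective colourings of `G` and `Gᶜ` with `b + 1` and `b` colours
-- when `G` has `2 * b + 1` vertices: `z` is the one-vertex colour class, the pairs are the others.
structure IsPairing {ι : Type*} (z : V) (x y : ι → V) : Prop where
  adj_x : ∀ i, G.Adj z (x i)
  not_adj_y : ∀ i, ¬ G.Adj z (y i)
  y_ne : ∀ i, y i ≠ z
  injective_x : Function.Injective x
  injective_y : Function.Injective y
  x_ne_y : ∀ i j, x i ≠ y j
  not_adj_of_adj : ∀ i w, G.Adj (x i) w → ¬ G.Adj (y i) w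

end SimpleGraph

namespace commonNbrGraph

variable {V α : Type*} {G : SimpleGraph V} (C : (commonNbrGraph G).Coloring α)
include C

theorem injOn_neighborSet (w : V) : Set.InjOn C (G.neighborSet w) := fun u hu v hv h => by
  by_contra huv
  exact C.valid ⟨huv, w, G.adj_symm hu, G.adj_symm hv⟩ h

theorem exists_adj_color_eq {v : V} {s : Finset V} (hs : ↑s ⊆ G.neighborSet v) {t : Finset α}
    (hst : ∀ u ∈ s, C u ∈ t) (hcard : #t ≤ #s) {c : α} (hc : c ∈ t) : ∃ u ∈ s, C u = c :=
  surjOn_of_injOn_of_card_le C hst ((injOn_neighborSet C v).mono hs) hcard hc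

omit C

variable [Fintype V] (G)

theorem degree_le_of_colorable [DecidableRel G.Adj] {a : ℕ}
    (hc : (commonNbrGraph G).Colorable a) (v : V) : G.degree v ≤ a := by
  obtain ⟨C⟩ := hc
  calc G.degree v = #(G.neighborFinset v) := (G.card_neighborFinset_eq_degree v).symm
    _ ≤ #(univ : Finset (Fin a)) := card_le_card_of_injOn C (fun _ _ => mem_univ _)
      ((injOn_neighborSet C v).mono (by simp))
    _ = a := by simp

theorem card_le_of_colorable_of_colorable_compl {a b : ℕ}
    (hca : (commonNbrGraph G).Colorable a) (hcb : (commonNbrGraph Gᶜ).Colorable b)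
    (h : 2 * a + 3 ≤ Fintype.card V) : Fintype.card V ≤ b := by
  classical
  have hcommon (u v : V) : ∃ w, Gᶜ.Adj u w ∧ Gᶜ.Adj v w := by
    apply Gᶜ.exists_common_adj_of_card_lt_degree_add_degree
    have hu := degree_le_of_colorable G hca u
    have hv := degree_le_of_colorable G hca v
    rw [G.degree_compl u, G.degree_compl v]
    omega
  obtain ⟨C⟩ := hcb
  have hC : Function.Injective C := fun u v huv => by
    by_contra hne
    exact C.valid ⟨hne, hcommon u v⟩ huv
  simpa using Fintype.card_le_of_injective C hC

theorem even_card_of_isRegularOfDegree [DecidableRel G.Adj] {d : ℕ}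
    (hreg : G.IsRegularOfDegree d) (hc : (commonNbrGraph G).Colorable d) :
    Even (Fintype.card V) := by
  classical
  obtain ⟨C⟩ := hc
  have hsees (v : V) : ∃ u, G.Adj v u ∧ C u = C v := by
    obtain ⟨u, hu, hCu⟩ := exists_adj_color_eq C (v := v) (s := G.neighborFinset v) (by simp)
      (fun _ _ => mem_univ _) (by simp [hreg v]) (mem_univ (C v))
    exact ⟨u, (G.mem_neighborFinset v u).1 hu, hCu⟩
  choose f hadj hcolor using hsees
  -- `f v` and `v` are both neighbours of `f v` of colour `C v`
  have hf : Function.Involutive f := fun v =>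
    injOn_neighborSet C (f v) (hadj (f v)) (G.adj_symm (hadj v))
      ((hcolor (f v)).trans (hcolor v))
  exact hf.even_card fun v => (G.ne_of_adj (hadj v)).symm

end commonNbrGraph

namespace SimpleGraph.IsPairing

variable {V : Type*} {G : SimpleGraph V} {ι : Type*} {z : V} {x y : ι → V} (hP : G.IsPairing z x y)
include hP

theorem compl_adj_z_y (i : ι) : Gᶜ.Adj z (y i) := ⟨(hP.y_ne i).symm, hP.not_adj_y i⟩

theorem compl_adj_x_y_of_forall_adj {l : ι} (hl : ∀ m ≠ l, G.Adj (y l) (y m)) {m : ι}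
    (hm : m ≠ l) : Gᶜ.Adj (x l) (y m) :=
  ⟨hP.x_ne_y l m, fun h => hP.not_adj_of_adj l (y m) h (hl m hm)⟩

theorem compl_adj_y_x_of_forall_adj {l : ι} (hl : ∀ m ≠ l, G.Adj (y l) (y m)) {m : ι}
    (hm : m ≠ l) : Gᶜ.Adj (y l) (x m) :=
  ⟨(hP.x_ne_y m l).symm, fun h => hP.not_adj_of_adj m (y l) (G.adj_symm h) (G.adj_symm (hl m hm))⟩

theorem adj_y_of_color_eq {α : Type*} (C : (commonNbrGraph Gᶜ).Coloring α) {w : V} {k m : ι}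
    (hw : w ≠ y k) (hC : C w = C (y k)) (hmk : m ≠ k) (hwm : Gᶜ.Adj w (y m)) :
    G.Adj (y k) (y m) := by
  by_contra h
  exact C.valid ⟨hw, y m, hwm, hP.injective_y.ne hmk.symm, h⟩ hC

theorem exists_color_y_eq [Fintype ι] {α : Type*} [Fintype α]
    (C : (commonNbrGraph Gᶜ).Coloring α) (hα : Fintype.card α ≤ Fintype.card ι) (c : α) :
    ∃ k, C (y k) = c := by
  classical
  obtain ⟨u, hu, hCu⟩ := commonNbrGraph.exists_adj_color_eq C (v := z) (s := univ.image y)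
    (t := univ) (by simpa [Set.subset_def] using hP.compl_adj_z_y) (fun _ _ => mem_univ _)
    (by simpa [card_image_of_injective _ hP.injective_y] using hα) (mem_univ c)
  obtain ⟨k, -, rfl⟩ := mem_image.1 hu
  exact ⟨k, hCu⟩

theorem exists_color_x_eq [Fintype ι] {α : Type*} [Fintype α]
    (C : (commonNbrGraph Gᶜ).Coloring α) (hα : Fintype.card α ≤ Fintype.card ι) {i : ι}
    (hi : ∀ m ≠ i, G.Adj (y i) (y m)) (c : α) : C z = c ∨ ∃ j ≠ i, C (x j) = c := by
  classical
  set T := insert z ((univ.erase i).image x)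
  have hT : ↑T ⊆ Gᶜ.neighborSet (y i) := by
    intro u hu
    simp only [T, coe_insert, coe_image, coe_erase, coe_univ, Set.mem_insert_iff,
      Set.mem_image, Set.mem_sdiff, Set.mem_univ, Set.mem_singleton_iff, true_and] at hu
    rcases hu with rfl | ⟨j, hj, rfl⟩
    · exact Gᶜ.adj_symm (hP.compl_adj_z_y i)
    · exact hP.compl_adj_y_x_of_forall_adj hi hj
  have hTcard : #T = Fintype.card ι := by
    have hz : z ∉ (univ.erase i).image x := by
      simpa using fun j _ => (G.ne_of_adj (hP.adj_x j)).symm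
    rw [card_insert_of_notMem hz, card_image_of_injective _ hP.injective_x,
      card_erase_of_mem (mem_univ _), card_univ]
    have : 0 < Fintype.card ι := Fintype.card_pos_iff.2 ⟨i⟩
    omega
  obtain ⟨u, hu, hCu⟩ := commonNbrGraph.exists_adj_color_eq C hT (fun _ _ => mem_univ _)
    (by simpa [hTcard] using hα) (mem_univ c)
  rcases mem_insert.1 hu with rfl | hu
  · exact Or.inl hCu
  · obtain ⟨j, hj, rfl⟩ := mem_image.1 hu
    exact Or.inr ⟨j, ne_of_mem_erase hj, hCu⟩

theorem not_colorable_compl [Fintype ι] (hι : 3 ≤ Fintype.card ι) :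
    ¬ (commonNbrGraph Gᶜ).Colorable (Fintype.card ι) := by
  classical
  rintro ⟨C⟩
  have hα : Fintype.card (Fin (Fintype.card ι)) ≤ Fintype.card ι := by simp
  obtain ⟨i, hi⟩ := hP.exists_color_y_eq C hα (C z)
  have hfull_i (m : ι) (hm : m ≠ i) : G.Adj (y i) (y m) :=
    hP.adj_y_of_color_eq C (hP.y_ne i).symm hi.symm hm (hP.compl_adj_z_y m)
  have hxz : C z ≠ C (x i) := by
    have : Nontrivial ι := Fintype.one_lt_card_iff_nontrivial.1 (by omega)
    obtain ⟨m, hm⟩ := exists_ne i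
    exact C.valid ⟨G.ne_of_adj (hP.adj_x i), y m, hP.compl_adj_z_y m,
      hP.compl_adj_x_y_of_forall_adj hfull_i hm⟩
  obtain hzx | ⟨j, hji, hj⟩ := hP.exists_color_x_eq C hα hfull_i (C (x i))
  · exact hxz hzx
  obtain ⟨k, hk⟩ := hP.exists_color_y_eq C hα (C (x i))
  have hki : k ≠ i := by
    rintro rfl
    exact hxz (hi.symm.trans hk)
  have hfull_k (m : ι) (hm : m ≠ k) : G.Adj (y k) (y m) := by
    rcases eq_or_ne m i with rfl | hmi
    · exact G.adj_symm (hfull_i k hki)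
    · exact hP.adj_y_of_color_eq C (hP.x_ne_y i k) hk.symm hm
        (hP.compl_adj_x_y_of_forall_adj hfull_i hmi)
  -- `x j` and `x i` share the neighbour `y k` in `Gᶜ`, or any third `y m` if `j = k`
  refine C.valid ⟨hP.injective_x.ne hji, ?_⟩ hj
  rcases eq_or_ne j k with rfl | hjk
  · obtain ⟨m, -, hm⟩ := exists_mem_notMem_of_card_lt_card (s := {i, j}) (t := univ)
      (by have := card_le_two (a := i) (b := j); rw [card_univ]; omega)
    simp only [mem_insert, mem_singleton, not_or] at hm
    exact ⟨y m, hP.compl_adj_x_y_of_forall_adj hfull_k hm.2,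
      hP.compl_adj_x_y_of_forall_adj hfull_i hm.1⟩
  · exact ⟨y k, Gᶜ.adj_symm (hP.compl_adj_y_x_of_forall_adj hfull_k hjk),
      hP.compl_adj_x_y_of_forall_adj hfull_i hki⟩

end SimpleGraph.IsPairing

namespace commonNbrGraph

variable {V α : Type*} [Fintype V] (G : SimpleGraph V)

section Pairing

variable [DecidableRel G.Adj] {b : ℕ} (hV : Fintype.card V ≤ 2 * b + 1)
  (hdeg : ∀ v, b ≤ G.degree v) (C : (commonNbrGraph G).Coloring α)
include hV hdeg

theorem adj_of_color_eq {u v : V} (huv : u ≠ v) (h : C u = C v) : G.Adj u v := by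
  by_contra hadj
  obtain ⟨w, hu, hv⟩ := G.exists_common_adj_of_not_adj huv hadj
    (by have := hdeg u; have := hdeg v; omega)
  exact C.valid ⟨huv, w, hu, hv⟩ h

theorem card_colorClass_le_two [DecidableEq α] (c : α) : #{v | C v = c} ≤ 2 := by
  by_contra! h
  obtain ⟨u, hu, v, hv, w, hw, huv, huw, hvw⟩ := two_lt_card.1 h
  simp only [mem_filter, mem_univ, true_and] at hu hv hw
  exact C.valid ⟨huw, v, adj_of_color_eq G hV hdeg C huv (hu.trans hv.symm),
    adj_of_color_eq G hV hdeg C hvw.symm (hw.trans hv.symm)⟩ (hu.trans hw.symm)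

end Pairing

theorem exists_isPairing [DecidableRel G.Adj] {b : ℕ} (hV : Fintype.card V = 2 * b + 1)
    (hdeg : ∀ v, b ≤ G.degree v) (hc : (commonNbrGraph G).Colorable (b + 1)) :
    ∃ (c₀ : Fin (b + 1)) (z : V) (x y : {c // c ≠ c₀} → V), G.IsPairing z x y := by
  obtain ⟨C⟩ := hc
  obtain ⟨c₀, hc₀, hcard⟩ := exists_eq_one_and_eq_two_of_sum_eq (Fintype.card_fin _)
    (card_colorClass_le_two G hV.le hdeg C) (by
      rw [← hV, ← card_univ]
      exact (card_eq_sum_card_fiberwise fun _ _ => mem_univ _).symm)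
  obtain ⟨z, hz⟩ := card_eq_one.1 hc₀
  have hC₀ (v : V) : C v = c₀ ↔ v = z := by simpa using Finset.ext_iff.1 hz v
  -- `z` has at least `b` neighbours, at most one of each colour, and none of colour `c₀`
  have hsees (c : {c // c ≠ c₀}) : ∃ u, G.Adj z u ∧ C u = c := by
    obtain ⟨u, hu, hCu⟩ := exists_adj_color_eq C (v := z) (s := G.neighborFinset z)
      (t := univ.erase c₀) (by simp)
      (fun u hu => mem_erase.2 ⟨fun h => G.ne_of_adj ((G.mem_neighborFinset z u).1 hu)
        ((hC₀ u).1 h).symm, mem_univ _⟩)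
      (by rw [card_erase_of_mem (mem_univ _), card_univ, Fintype.card_fin, card_neighborFinset_eq_degree]
          exact hdeg z)
      (mem_erase.2 ⟨c.2, mem_univ _⟩)
    exact ⟨u, (G.mem_neighborFinset z u).1 hu, hCu⟩
  choose x hzx hx using hsees
  have hpartner (c : {c // c ≠ c₀}) : ∃ y, C y = c ∧ y ≠ x c := by
    obtain ⟨y, hy, hne⟩ := exists_mem_ne (by rw [hcard c c.2]; norm_num) (x c)
    exact ⟨y, (mem_filter.1 hy).2, hne⟩
  choose y hy hyx using hpartner
  refine ⟨c₀, z, x, y,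
    { adj_x := hzx
      not_adj_y := fun c h =>
        hyx c (injOn_neighborSet C z h (hzx c) ((hy c).trans (hx c).symm))
      y_ne := fun c h => c.2 (by rw [← hy c, h, hC₀])
      injective_x := fun c d h => Subtype.ext (by rw [← hx c, h, hx d])
      injective_y := fun c d h => Subtype.ext (by rw [← hy c, h, hy d])
      x_ne_y := fun c d h => by
        obtain rfl : c = d := Subtype.ext (by rw [← hx c, h, hy d])
        exact hyx c h.symm
      not_adj_of_adj := fun c w hxw hyw => hyx c (injOn_neighborSet C w (G.adj_symm hyw)
        (G.adj_symm hxw) ((hy c).trans (hx c).symm)) }⟩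

theorem not_colorable_compl_of_colorable_succ {b : ℕ} (hb : 3 ≤ b)
    (hV : Fintype.card V = 2 * b + 1) (hc : (commonNbrGraph G).Colorable (b + 1)) :
    ¬ (commonNbrGraph Gᶜ).Colorable b := by
  classical
  intro hcb
  have hdeg (v : V) : b ≤ G.degree v := by
    have := degree_le_of_colorable Gᶜ hcb v
    rw [G.degree_compl] at this
    omega
  obtain ⟨c₀, z, x, y, hP⟩ := exists_isPairing G hV hdeg hc
  have hcard : Fintype.card {c // c ≠ c₀} = b := by simp [Fintype.card_subtype_compl]
  exact hP.not_colorable_compl (by omega) (by rwa [hcard])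

theorem card_lt_add_of_colorable (hn : 7 ≤ Fintype.card V) (hodd : Odd (Fintype.card V))
    {a b : ℕ} (hca : (commonNbrGraph G).Colorable a) (hcb : (commonNbrGraph Gᶜ).Colorable b) :
    Fintype.card V < a + b := by
  classical
  by_contra! hab
  have ⟨m, hm⟩ := hodd
  obtain ⟨v₀⟩ : Nonempty V := Fintype.card_pos_iff.1 (by omega)
  have hpos {H : SimpleGraph V} {k : ℕ} (hk : (commonNbrGraph H).Colorable k) : 0 < k :=
    Nat.pos_of_ne_zero (by rintro rfl; exact (colorable_zero_iff.1 hk).false v₀)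
  have hdeg (v : V) : G.degree v ≤ a ∧ Fintype.card V ≤ G.degree v + b + 1 := by
    have h₁ := degree_le_of_colorable G hca v
    have h₂ := degree_le_of_colorable Gᶜ hcb v
    rw [G.degree_compl] at h₂
    exact ⟨h₁, by omega⟩
  have ha : m ≤ a := by
    by_contra! h
    have := card_le_of_colorable_of_colorable_compl G hca hcb (by omega)
    have := hpos hca
    omega
  have hb : m ≤ b := by
    by_contra! h
    have := card_le_of_colorable_of_colorable_compl Gᶜ hcb (by rwa [compl_compl]) (by omega)
    have := hpos hcb
    omega
  have := hdeg v₀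
  obtain ⟨rfl, rfl⟩ | ⟨rfl, rfl⟩ | ⟨rfl, rfl⟩ :
      (a = m ∧ b = m) ∨ (a = m + 1 ∧ b = m) ∨ (a = m ∧ b = m + 1) := by omega
  · refine Nat.not_even_iff_odd.2 hodd (even_card_of_isRegularOfDegree G (fun v => ?_) hca)
    have := hdeg v
    omega
  · exact not_colorable_compl_of_colorable_succ G (by omega) hm hca hcb
  · exact not_colorable_compl_of_colorable_succ Gᶜ (by omega) hm hcb (by rwa [compl_compl])

end commonNbrGraph

theorem chiInj_le_card {V : Type*} [Fintype V] (G : SimpleGraph V) :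
    chiInj G ≤ Fintype.card V :=
  (commonNbrGraph G).colorable_of_fintype.chromaticNumber_le

theorem chiInj_nordhaus_gaddum_odd {V : Type*} [Fintype V] (G : SimpleGraph V)
    (hn : 7 ≤ Fintype.card V) (hodd : Odd (Fintype.card V)) :
    (Fintype.card V : ℕ∞) + 1 ≤ chiInj G + chiInj Gᶜ ∧
      chiInj G + chiInj Gᶜ ≤ 2 * (Fintype.card V : ℕ∞) := by
  have hfin (H : SimpleGraph V) : ((chiInj H).toNat : ℕ∞) = chiInj H :=
    ENat.natCast_toNat (ne_top_of_le_ne_top (ENat.natCast_ne_top _) (chiInj_le_card H))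
  refine ⟨?_, ?_⟩
  · rw [← hfin G, ← hfin Gᶜ]
    exact_mod_cast commonNbrGraph.card_lt_add_of_colorable G hn hodd
      (colorable_chromaticNumber_of_fintype _) (colorable_chromaticNumber_of_fintype _)
  · rw [two_mul]
    exact add_le_add (chiInj_le_card G) (chiInj_le_card Gᶜ)
end
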